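/- arXiv:2411.08491 — 3 statements merged into one kernel-verified Lean document; each statement's English description precedes it below -/
import Mathlib

section
/- Under complete randomization with treated proportion π₁ and H a projection hat matrix annihilating the constant vector (so ∑_j H_{i,j} y_j(1) summed over all i,j vanishes: 𝟙ᵀHv = 0), the bias of the HOIF-motivated adjusted estimator τ̂_{adj,2} = τ̂_unadj − IF̂₂₂ for the finite-population mean τ̄ = (1/n)∑ y_i(1) equals bias(τ̂_{adj,2}) = −(π₀/π₁)(1/(n(n−1))) ∑_{i=1}^n H_{i,i} y_i(1). -/
/-! Under complete randomization `P(i ∈ A) = π₁` and, for `i ≠ j`,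
`P(i, j ∈ A) = π₁ (n₁ - 1)/(n - 1)`, both read off from the number of `n₁`-subsets containing a
given set. Hence `τ̂_unadj` is unbiased, and each off-diagonal term of `IF̂₂₂` has expectation
`E[(t_i/π₁ - 1) t_j/π₁] H i j y j = -(π₀/π₁)/(n - 1) · H i j y j`. Because `𝟙ᵀ H y = 0`, the
off-diagonal part of `𝟙ᵀ H y` equals `-∑ i, H i i y i`. -/

open Finset

noncomputable def creExp (n n₁ : ℕ) (f : Finset (Fin n) → ℝ) : ℝ :=
  (∑ A ∈ Finset.powersetCard n₁ (Finset.univ : Finset (Fin n)), f A) /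
    ((Finset.powersetCard n₁ (Finset.univ : Finset (Fin n))).card : ℝ)

noncomputable def ind {n : ℕ} (i : Fin n) (A : Finset (Fin n)) : ℝ := if i ∈ A then 1 else 0

/-- Stated as a product so that it also covers `#t > k` (both sides vanish) and avoids `ℕ`
subtraction. -/
theorem card_filter_powersetCard_superset_mul_choose {α : Type*} [DecidableEq α]
    {s t : Finset α} (hts : t ⊆ s) (k : ℕ) :
    #{A ∈ s.powersetCard k | t ⊆ A} * (#s).choose #t = (#s).choose k * k.choose #t := by
  by_cases htk : #t ≤ k
  · rw [card_filter_powersetCard_subset t s k hts htk, Nat.choose_mul htk, mul_comm]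
  · have hempty : {A ∈ s.powersetCard k | t ⊆ A} = ∅ := by
      refine filter_eq_empty_iff.mpr fun A hA htA => htk ?_
      exact (mem_powersetCard.mp hA).2 ▸ card_le_card htA
    rw [hempty, Nat.choose_eq_zero_of_lt (not_le.mp htk), card_empty, zero_mul, mul_zero]

theorem sum_sum_erase_eq_neg_sum_diag {ι R : Type*} [Fintype ι] [DecidableEq ι] [CommRing R]
    (H : Matrix ι ι R) (v : ι → R) (hann : ∑ i, ∑ j, H i j * v j = 0) :
    ∑ i, ∑ j ∈ univ.erase i, H i j * v j = -∑ i, H i i * v i := by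
  rw [eq_neg_iff_add_eq_zero, ← sum_add_distrib, ← hann]
  exact sum_congr rfl fun i _ => sum_erase_add _ _ (mem_univ i)

section CompleteRandomization

open scoped BigOperators

variable {n k : ℕ}

theorem creExp_eq_expect (f : Finset (Fin n) → ℝ) :
    creExp n k f = 𝔼 A ∈ powersetCard k univ, f A :=
  (expect_eq_sum_div_card _ _).symm

theorem creExp_sub (f g : Finset (Fin n) → ℝ) :
    creExp n k (fun A => f A - g A) = creExp n k f - creExp n k g := by
  simp only [creExp_eq_expect, expect_sub_distrib]

theorem creExp_mul_const (f : Finset (Fin n) → ℝ) (c : ℝ) :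
    creExp n k (fun A => f A * c) = creExp n k f * c := by
  simp only [creExp_eq_expect, expect_mul]

theorem creExp_const_mul (c : ℝ) (f : Finset (Fin n) → ℝ) :
    creExp n k (fun A => c * f A) = c * creExp n k f := by
  simp only [creExp_eq_expect, mul_expect]

theorem creExp_sum {ι : Type*} (s : Finset ι) (f : ι → Finset (Fin n) → ℝ) :
    creExp n k (fun A => ∑ i ∈ s, f i A) = ∑ i ∈ s, creExp n k (f i) := by
  simp only [creExp_eq_expect, expect_sum_comm]

theorem creExp_subset_indicator (hk : k ≤ n) (t : Finset (Fin n)) :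
    creExp n k (fun A => if t ⊆ A then 1 else 0) = (k.choose #t : ℝ) / n.choose #t := by
  have hcount := card_filter_powersetCard_superset_mul_choose (subset_univ t) k
  rw [card_univ, Fintype.card_fin] at hcount
  have hnk : (n.choose k : ℝ) ≠ 0 := by exact_mod_cast (Nat.choose_pos hk).ne'
  have hnt : (n.choose #t : ℝ) ≠ 0 := by
    exact_mod_cast (Nat.choose_pos (card_le_univ t |>.trans_eq (Fintype.card_fin n))).ne'
  rw [creExp, sum_boole, card_powersetCard, card_univ, Fintype.card_fin,
    div_eq_div_iff hnk hnt]
  exact_mod_cast hcount.trans (mul_comm _ _)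

theorem creExp_ind (hk : k ≤ n) (i : Fin n) : creExp n k (ind i) = k / n := by
  have hind : ind i = fun A => if {i} ⊆ A then 1 else 0 := by
    funext A; simp [ind]
  rw [hind, creExp_subset_indicator hk, card_singleton, Nat.choose_one_right,
    Nat.choose_one_right]

theorem creExp_ind_mul_ind (hk : k ≤ n) {i j : Fin n} (hij : i ≠ j) :
    creExp n k (fun A => ind i A * ind j A) = k * (k - 1) / (n * (n - 1)) := by
  have hind : (fun A => ind i A * ind j A) = fun A => if {i, j} ⊆ A then 1 else 0 := by
    funext A; by_cases hi : i ∈ A <;> by_cases hj : j ∈ A <;> simp [ind, hi, hj, insert_subset_iff]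
  rw [hind, creExp_subset_indicator hk, card_pair hij, Nat.cast_choose_two, Nat.cast_choose_two,
    div_div_div_cancel_right₀ two_ne_zero]

theorem creExp_ipw (hk₀ : 0 < k) (hk : k ≤ n) (i : Fin n) :
    creExp n k (fun A => ind i A / (k / n)) = 1 := by
  have hkR : (0 : ℝ) < k := by exact_mod_cast hk₀
  have hnR : (0 : ℝ) < n := by exact_mod_cast hk₀.trans_le hk
  simp_rw [div_eq_mul_inv (ind i _)]
  rw [creExp_mul_const, creExp_ind hk]
  field_simp

theorem creExp_ipw_cross (hk₀ : 0 < k) (hk : k ≤ n) {i j : Fin n} (hij : i ≠ j) :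
    creExp n k (fun A => (ind i A / (k / n) - 1) * (ind j A / (k / n)))
      = -((1 - k / n) / (k / n)) / (n - 1) := by
  have hn : (2 : ℝ) ≤ n := by
    have := Fin.val_ne_of_ne hij
    exact_mod_cast (show 2 ≤ n by omega)
  have hkR : (0 : ℝ) < k := by exact_mod_cast hk₀
  have hexpand : (fun A => (ind i A / (k / n) - 1) * (ind j A / (k / n)))
      = fun A => ind i A * ind j A * (n / k) ^ 2 - ind j A * (n / k) := by
    funext A; field_simp
  rw [hexpand, creExp_sub, creExp_mul_const, creExp_mul_const, creExp_ind_mul_ind hk hij,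
    creExp_ind hk]
  have hn1 : (n : ℝ) - 1 ≠ 0 := by linarith
  field_simp
  ring

end CompleteRandomization

/-- Under CRE with treated proportion `π₁ = n₁/n`, `π₀ = 1 - π₁`, and `H`
annihilating constants (`𝟙ᵀ H v = 0` for all `v`), the bias of
`τ̂_{adj,2} = τ̂_unadj - IF̂₂₂` for the finite-population mean `τ̄ = (1/n) ∑ y_i(1)`
equals `-(π₀/π₁)(1/(n(n-1))) ∑ H_{i,i} y_i(1)`. -/
theorem cre_adj2_bias (n n₁ : ℕ) (h0 : 0 < n₁) (h1 : n₁ < n)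
    (π₁ π₀ : ℝ) (hπ : π₁ = (n₁ : ℝ) / n) (hπ0 : π₀ = 1 - π₁)
    (H : Matrix (Fin n) (Fin n) ℝ) (y : Fin n → ℝ)
    (hann : ∀ v : Fin n → ℝ, ∑ i, ∑ j, H i j * v j = 0) :
    creExp n n₁ (fun A =>
        (1 / (n : ℝ)) * ∑ i, ind i A / π₁ * y i
        - (1 / (n : ℝ)) * ∑ i, ∑ j ∈ Finset.univ.erase i,
            (ind i A / π₁ - 1) * H i j * (ind j A * y j / π₁))
      - (∑ i, y i) / (n : ℝ)
    = -(π₀ / π₁) * (1 / ((n : ℝ) * ((n : ℝ) - 1))) * ∑ i, H i i * y i := by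
  subst hπ hπ0
  have hunadj (i : Fin n) : creExp n n₁ (fun A => ind i A / (n₁ / n) * y i) = y i := by
    rw [creExp_mul_const, creExp_ipw h0 h1.le, one_mul]
  have hcross (i j : Fin n) (hj : j ∈ univ.erase i) :
      creExp n n₁ (fun A => (ind i A / (n₁ / n) - 1) * H i j * (ind j A * y j / (n₁ / n)))
        = -((1 - n₁ / n) / (n₁ / n)) / (n - 1) * (H i j * y j) := by
    rw [← creExp_ipw_cross h0 h1.le (mem_erase.mp hj).1.symm, ← creExp_mul_const]
    congr 1; funext A; ring
  rw [creExp_sub, creExp_const_mul, creExp_const_mul, creExp_sum, creExp_sum,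
    sum_congr rfl fun i _ => hunadj i,
    sum_congr rfl fun i _ => (creExp_sum _ _).trans (sum_congr rfl (hcross i)),
    ← sum_congr rfl fun i _ => mul_sum _ _ _, ← mul_sum,
    sum_sum_erase_eq_neg_sum_diag H y (hann y)]
  have hn1 : (n : ℝ) - 1 ≠ 0 := by
    have : (1 : ℝ) < n := by exact_mod_cast (show 1 < n by omega)
    linarith
  field_simp
  ring
end

section
/- Under complete randomization, the estimator τ̂_{adj,3} = τ̂_{adj,2} + (π₀/π₁)(1/(n(n−1)))∑_{i=1}^n H_{i,i}(t_i y_i(1)/π₁) is exactly unbiased for τ̄ = (1/n)∑_i y_i(1), where τ̂_{adj,2} = τ̂_unadj − IF̂₂₂. -/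
open Finset

lemma filt_mem {α : Type*} [DecidableEq α] (s : Finset α) (k : ℕ) (i : α) (hi : i ∈ s) :
    (s.powersetCard (k+1)).filter (fun A => i ∈ A)
      = ((s.erase i).powersetCard k).image (insert i) := by
  ext A
  simp only [mem_filter, mem_powersetCard, mem_image]
  constructor
  · rintro ⟨⟨hsub, hcard⟩, hiA⟩
    refine ⟨A.erase i, ⟨?_, ?_⟩, insert_erase hiA⟩
    · intro x hx; exact mem_erase.mpr ⟨(mem_erase.mp hx).1, hsub (mem_erase.mp hx).2⟩
    · rw [card_erase_of_mem hiA, hcard]; rfl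
  · rintro ⟨B, ⟨hsub, hcard⟩, rfl⟩
    have hiB : i ∉ B := fun h => (notMem_erase i s) (hsub h)
    refine ⟨⟨?_, ?_⟩, mem_insert_self i B⟩
    · intro x hx
      rcases mem_insert.mp hx with rfl | h
      · exact hi
      · exact (erase_subset i s) (hsub h)
    · rw [card_insert_of_notMem hiB, hcard]

lemma filt_card {α : Type*} [DecidableEq α] (s : Finset α) (k : ℕ) (i : α) (hi : i ∈ s) :
    ((s.powersetCard (k+1)).filter (fun A => i ∈ A)).card
      = Nat.choose (s.card - 1) k := by
  rw [filt_mem s k i hi, card_image_of_injOn, card_powersetCard, card_erase_of_mem hi]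
  intro A hA B hB hAB
  simp only [mem_coe, mem_powersetCard] at hA hB
  have hA' : i ∉ A := fun h => (notMem_erase i s) (hA.1 h)
  have hB' : i ∉ B := fun h => (notMem_erase i s) (hB.1 h)
  have := congrArg (Finset.erase · i) hAB
  simpa [erase_insert hA', erase_insert hB'] using this

lemma insert_injOn' {α : Type*} [DecidableEq α] (i : α) (T : Finset (Finset α))
    (h : ∀ A ∈ T, i ∉ A) : Set.InjOn (insert i) (T : Set (Finset α)) := by
  intro A hA B hB hAB
  have := congrArg (Finset.erase · i) hAB
  simpa [erase_insert (h A hA), erase_insert (h B hB)] using this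

lemma filt2_card {α : Type*} [DecidableEq α] (s : Finset α) (k : ℕ) (i j : α)
    (hij : i ≠ j) (hi : i ∈ s) (hj : j ∈ s) :
    ((s.powersetCard (k+2)).filter (fun A => i ∈ A ∧ j ∈ A)).card
      = Nat.choose (s.card - 2) k := by
  have hj' : j ∈ s.erase i := mem_erase.mpr ⟨hij.symm, hj⟩
  rw [← filter_filter, filt_mem s (k+1) i hi, filter_image]
  have hcong : ((s.erase i).powersetCard (k+1)).filter (fun B => j ∈ insert i B)
      = ((s.erase i).powersetCard (k+1)).filter (fun B => j ∈ B) := by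
    apply filter_congr
    intro B _
    simp [mem_insert, hij.symm]
  rw [hcong, filt_mem (s.erase i) k j hj', card_image_of_injOn, card_image_of_injOn,
    card_powersetCard, card_erase_of_mem hj', card_erase_of_mem hi]
  · congr 1
  · apply insert_injOn'
    intro A hA h
    simp only [mem_powersetCard] at hA
    exact (notMem_erase j _) (hA.1 h)
  · apply insert_injOn'
    intro A hA h
    simp only [mem_image] at hA
    obtain ⟨B, hB, rfl⟩ := hA
    simp only [mem_powersetCard] at hB
    rcases mem_insert.mp h with rfl | h'
    · exact hij rfl
    · exact (notMem_erase i s) ((erase_subset j _) (hB.1 h'))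

lemma expand_lin {n : ℕ} (S : Finset (Finset (Fin n))) (a : Fin n → ℝ)
    (b c : Fin n → Fin n → ℝ) :
    ∑ A ∈ S, (∑ i, ind i A * a i
        + ∑ i, ∑ j ∈ Finset.univ.erase i, (ind i A * ind j A * b i j + ind j A * c i j))
      = ∑ i, (∑ A ∈ S, ind i A) * a i
        + ∑ i, ∑ j ∈ Finset.univ.erase i,
            ((∑ A ∈ S, ind i A * ind j A) * b i j + (∑ A ∈ S, ind j A) * c i j) := by
  rw [Finset.sum_add_distrib]
  congr 1
  · rw [Finset.sum_comm]
    exact sum_congr rfl fun i _ => by rw [← Finset.sum_mul]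
  · rw [Finset.sum_comm]
    refine sum_congr rfl fun i _ => ?_
    rw [Finset.sum_comm]
    refine sum_congr rfl fun j _ => ?_
    rw [Finset.sum_add_distrib, ← Finset.sum_mul, ← Finset.sum_mul]

lemma sum_ind_one {n n₁ : ℕ} (h0 : 0 < n₁) (i : Fin n) :
    ∑ A ∈ Finset.powersetCard n₁ (Finset.univ : Finset (Fin n)), ind i A
      = (Nat.choose (n-1) (n₁-1) : ℝ) := by
  have hn : n₁ - 1 + 1 = n₁ := Nat.succ_pred_eq_of_pos h0
  simp only [ind]
  rw [Finset.sum_boole, ← hn, filt_card _ _ i (mem_univ i)]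
  simp

lemma sum_ind_pair {n n₁ : ℕ} (h2 : 2 ≤ n₁) {i j : Fin n} (hij : i ≠ j) :
    ∑ A ∈ Finset.powersetCard n₁ (Finset.univ : Finset (Fin n)), ind i A * ind j A
      = (Nat.choose (n-2) (n₁-2) : ℝ) := by
  have hn : n₁ - 2 + 2 = n₁ := by omega
  have hprod : ∀ A : Finset (Fin n),
      ind i A * ind j A = if i ∈ A ∧ j ∈ A then (1:ℝ) else 0 := by
    intro A
    by_cases hi : i ∈ A <;> by_cases hj : j ∈ A <;> simp [ind, hi, hj]
  simp only [hprod]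
  rw [Finset.sum_boole, ← hn, filt2_card _ _ i j hij (mem_univ i) (mem_univ j)]
  simp

lemma sum_ind_pair_one {n : ℕ} {i j : Fin n} (hij : i ≠ j) :
    ∑ A ∈ Finset.powersetCard 1 (Finset.univ : Finset (Fin n)), ind i A * ind j A = 0 := by
  apply Finset.sum_eq_zero
  intro A hA
  have hcard : A.card = 1 := (mem_powersetCard.mp hA).2
  by_cases hi : i ∈ A
  · by_cases hj : j ∈ A
    · exfalso
      have hsub : ({i, j} : Finset (Fin n)) ⊆ A := by
        intro x hx; rcases mem_insert.mp hx with rfl | hx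
        · exact hi
        · rw [mem_singleton.mp hx]; exact hj
      have := card_le_card hsub
      rw [card_pair hij, hcard] at this
      omega
    · simp [ind, hj]
  · simp [ind, hi]

/-- Under CRE with treated proportion `π₁ = n₁/n`, `π₀ = 1 - π₁`, and `H`
the centered hat matrix (annihilating constants), the estimator
`τ̂_{adj,3} = τ̂_{adj,2} + (π₀/π₁)(1/(n(n-1))) ∑ H_{i,i} (t_i y_i(1)/π₁)`
is exactly unbiased for `τ̄ = (1/n)∑ y_i(1)`. -/
theorem cre_adj3_unbiased (n n₁ : ℕ) (h0 : 0 < n₁) (h1 : n₁ < n)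
    (π₁ π₀ : ℝ) (hπ : π₁ = (n₁ : ℝ) / n) (hπ0 : π₀ = 1 - π₁)
    (H : Matrix (Fin n) (Fin n) ℝ) (y : Fin n → ℝ)
    (hann : ∀ v : Fin n → ℝ, ∑ i, ∑ j, H i j * v j = 0) :
    creExp n n₁ (fun A =>
        ((1 / (n : ℝ)) * ∑ i, ind i A / π₁ * y i
          - (1 / (n : ℝ)) * ∑ i, ∑ j ∈ Finset.univ.erase i,
              (ind i A / π₁ - 1) * H i j * (ind j A * y j / π₁))
        + (π₀ / π₁) * (1 / ((n : ℝ) * ((n : ℝ) - 1))) *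
            ∑ i, H i i * (ind i A * y i / π₁))
      = (∑ i, y i) / (n : ℝ) := by
  have hn2 : 2 ≤ n := by omega
  have hnR : (0:ℝ) < n := by exact_mod_cast (by omega : 0 < n)
  have hn1R : (0:ℝ) < n₁ := by exact_mod_cast h0
  have hnm1 : (0:ℝ) < (n:ℝ) - 1 := by
    have : (2:ℝ) ≤ n := by exact_mod_cast hn2
    linarith
  have hπ₁pos : 0 < π₁ := by rw [hπ]; positivity
  set S := Finset.powersetCard n₁ (Finset.univ : Finset (Fin n)) with hSdef
  set c1 : ℝ := (Nat.choose (n-1) (n₁-1) : ℝ) with hc1def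
  set c2 : ℝ := if n₁ = 1 then 0 else (Nat.choose (n-2) (n₁-2) : ℝ) with hc2def
  set N : ℝ := (Nat.choose n n₁ : ℝ) with hNdef
  have hone : ∀ i : Fin n, ∑ A ∈ S, ind i A = c1 := fun i => sum_ind_one h0 i
  have hpair : ∀ i j : Fin n, j ≠ i → ∑ A ∈ S, ind i A * ind j A = c2 := by
    intro i j hij
    by_cases h : n₁ = 1
    · rw [hc2def, if_pos h, hSdef, h]
      exact sum_ind_pair_one (Ne.symm hij)
    · rw [hc2def, if_neg h]
      exact sum_ind_pair (by omega) (Ne.symm hij)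
  have hA : (n:ℝ) * c1 = N * n₁ := by
    have h := Nat.add_one_mul_choose_eq (n-1) (n₁-1)
    have e1 : n - 1 + 1 = n := by omega
    have e2 : n₁ - 1 + 1 = n₁ := by omega
    rw [e1, e2] at h
    rw [hc1def, hNdef]
    exact_mod_cast h
  have hB : ((n:ℝ) - 1) * c2 = c1 * ((n₁:ℝ) - 1) := by
    by_cases h : n₁ = 1
    · rw [hc2def, if_pos h, h]; simp
    · rw [hc2def, if_neg h]
      have h2 : 2 ≤ n₁ := by omega
      have hnat : (n-1) * Nat.choose (n-2) (n₁-2) = Nat.choose (n-1) (n₁-1) * (n₁-1) := by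
        have h := Nat.add_one_mul_choose_eq (n-2) (n₁-2)
        have e1 : n - 2 + 1 = n - 1 := by omega
        have e2 : n₁ - 2 + 1 = n₁ - 1 := by omega
        simpa [Nat.succ_eq_add_one, e1, e2] using h
      have hcast := congrArg (Nat.cast : ℕ → ℝ) hnat
      push_cast [Nat.cast_sub (by omega : 1 ≤ n), Nat.cast_sub (by omega : 1 ≤ n₁)] at hcast
      rw [hc1def]
      linear_combination hcast
  have hcard : (S.card : ℝ) = N := by
    rw [hSdef, card_powersetCard, hNdef]
    simp
  have hNpos : (0:ℝ) < N := by
    rw [hNdef]; exact_mod_cast Nat.choose_pos h1.le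
  -- scalar constants
  set u : ℝ := 1/((n:ℝ)*π₁) with hu
  set v : ℝ := (π₀/π₁) * (1/((n:ℝ)*((n:ℝ)-1))) * (1/π₁) with hv
  set w : ℝ := -(1/(n:ℝ)) * (1/(π₁*π₁)) with hw
  set z : ℝ := (1/(n:ℝ)) * (1/π₁) with hz
  set D : ℝ := ∑ i, H i i * y i with hD
  set SH : ℝ := ∑ i, ∑ j ∈ Finset.univ.erase i, H i j * y j with hSHdef
  have hSH : SH = -D := by
    have h := hann y
    have hsplit : ∀ i : Fin n, ∑ j, H i j * y j
        = H i i * y i + ∑ j ∈ Finset.univ.erase i, H i j * y j :=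
      fun i => (Finset.add_sum_erase Finset.univ _ (mem_univ i)).symm
    rw [Finset.sum_congr rfl (fun i _ => hsplit i), Finset.sum_add_distrib] at h
    rw [hSHdef, hD] at *
    linarith
  -- pointwise canonical form
  have hF : ∀ A : Finset (Fin n),
      ((1 / (n : ℝ)) * ∑ i, ind i A / π₁ * y i
        - (1 / (n : ℝ)) * ∑ i, ∑ j ∈ Finset.univ.erase i,
            (ind i A / π₁ - 1) * H i j * (ind j A * y j / π₁))
      + (π₀ / π₁) * (1 / ((n : ℝ) * ((n : ℝ) - 1))) * ∑ i, H i i * (ind i A * y i / π₁)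
      = ∑ i, ind i A * (y i * u + H i i * y i * v)
        + ∑ i, ∑ j ∈ Finset.univ.erase i,
            (ind i A * ind j A * (H i j * y j * w) + ind j A * (H i j * y j * z)) := by
    intro A
    have hsum1 : ∑ i, ind i A * (y i * u + H i i * y i * v)
        = (1/(n:ℝ)) * ∑ i, ind i A / π₁ * y i
          + (π₀/π₁) * (1/((n:ℝ)*((n:ℝ)-1))) * ∑ i, H i i * (ind i A * y i / π₁) := by
      rw [mul_sum, mul_sum, ← Finset.sum_add_distrib]
      refine sum_congr rfl fun i _ => ?_
      rw [hu, hv]; ring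
    have hsum2 : ∑ i, ∑ j ∈ Finset.univ.erase i,
        (ind i A * ind j A * (H i j * y j * w) + ind j A * (H i j * y j * z))
        = -((1/(n:ℝ)) * ∑ i, ∑ j ∈ Finset.univ.erase i,
            (ind i A / π₁ - 1) * H i j * (ind j A * y j / π₁)) := by
      have step : ∀ i : Fin n, ∀ j ∈ Finset.univ.erase i,
          ind i A * ind j A * (H i j * y j * w) + ind j A * (H i j * y j * z)
          = (-(1/(n:ℝ))) * ((ind i A / π₁ - 1) * H i j * (ind j A * y j / π₁)) := by
        intro i j _
        rw [hw, hz]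
        field_simp
        ring
      rw [Finset.sum_congr rfl fun i _ => Finset.sum_congr rfl (step i)]
      simp only [← Finset.mul_sum]
      ring
    rw [hsum1, hsum2]
    ring
  have key : ∑ A ∈ S, (((1 / (n : ℝ)) * ∑ i, ind i A / π₁ * y i
        - (1 / (n : ℝ)) * ∑ i, ∑ j ∈ Finset.univ.erase i,
            (ind i A / π₁ - 1) * H i j * (ind j A * y j / π₁))
      + (π₀ / π₁) * (1 / ((n : ℝ) * ((n : ℝ) - 1))) * ∑ i, H i i * (ind i A * y i / π₁))
      = c1 * ((∑ i, y i) * u + D * v) + (c2 * w + c1 * z) * SH := by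
    rw [Finset.sum_congr rfl fun A _ => hF A,
      expand_lin S (fun i => y i * u + H i i * y i * v)
        (fun i j => H i j * y j * w) (fun i j => H i j * y j * z)]
    have e1 : ∑ i, (∑ A ∈ S, ind i A) * (y i * u + H i i * y i * v)
        = c1 * ((∑ i, y i) * u + D * v) := by
      rw [Finset.sum_congr rfl fun i _ => by rw [hone i]]
      calc ∑ i, c1 * (y i * u + H i i * y i * v)
          = ∑ i, (c1 * u * y i + c1 * v * (H i i * y i)) :=
            sum_congr rfl fun i _ => by ring
        _ = c1 * u * (∑ i, y i) + c1 * v * (∑ i, H i i * y i) := by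
            rw [Finset.sum_add_distrib, ← Finset.mul_sum, ← Finset.mul_sum]
        _ = c1 * ((∑ i, y i) * u + D * v) := by rw [hD]; ring
    have e2 : ∑ i, ∑ j ∈ Finset.univ.erase i,
        ((∑ A ∈ S, ind i A * ind j A) * (H i j * y j * w)
          + (∑ A ∈ S, ind j A) * (H i j * y j * z))
        = (c2 * w + c1 * z) * SH := by
      rw [hSHdef, mul_sum]
      refine sum_congr rfl fun i _ => ?_
      rw [mul_sum]
      refine sum_congr rfl fun j hj => ?_
      rw [hone j, hpair i j (mem_erase.mp hj).1]
      ring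
    rw [e1, e2]
  rw [creExp, ← hSdef, key, hcard]
  have hc1 : c1 = N * n₁ / n := by
    field_simp at hA ⊢
    linarith
  have hc2 : c2 = c1 * ((n₁:ℝ) - 1) / ((n:ℝ) - 1) := by
    field_simp
    linarith [hB]
  rw [hSH, hc2, hc1, hu, hv, hw, hz, hπ0, hπ]
  have h1 : (n:ℝ) ≠ 0 := hnR.ne'
  have h2 : (n₁:ℝ) ≠ 0 := hn1R.ne'
  have h3 : (n:ℝ) - 1 ≠ 0 := hnm1.ne'
  have h4 : N ≠ 0 := hNpos.ne'
  field_simp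
  ring
end

section
/- Algebraic identity: the debiased adjusted estimator τ̂_db = τ̂_adj + (π₀/π₁)(1/n)∑_{i=1}^n (t_i/π₁) H_{i,i}(y_i − τ̂_unadj) equals the centered HOIF estimator τ̂_{adj,2}^† = τ̂_unadj − (1/n)∑_{1≤i≠j≤n}(t_i/π₁ − 1) H_{i,j} (t_j(y_j − τ̂_unadj)/π₁), where τ̂_adj = τ̂_unadj − (1/n)∑_{i=1}^n ∑_{j=1}^n (t_i/π₁ − 1) H_{i,j} (t_j(y_j − τ̂_unadj)/π₁). -/
open Finset Matrix

/-- Algebraic identity `τ̂_db = τ̂_{adj,2}^†`: the debiased adjusted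
estimator of Lu et al. equals the centered HOIF estimator. Here `t_i ∈ {0,1}`,
`H` is the centered hat matrix (symmetric, idempotent, annihilating constants),
`τ̂_adj = τ̂_unadj - (1/n)∑_{i,j}(t_i/π₁-1)H_{i,j}(t_j(y_j-τ̂_unadj)/π₁)`, and
`τ̂_db = τ̂_adj + (π₀/π₁)(1/n)∑ (t_i/π₁)H_{i,i}(y_i-τ̂_unadj)`. -/
theorem db_equals_centered_hoif (n : ℕ) (hn : 0 < n)
    (π₁ π₀ : ℝ) (hπ : π₁ ≠ 0) (hπ0 : π₀ = 1 - π₁)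
    (t : Fin n → ℝ) (ht : ∀ i, t i = 0 ∨ t i = 1)
    (y : Fin n → ℝ)
    (H : Matrix (Fin n) (Fin n) ℝ)
    (hsym : Hᵀ = H) (hidem : H * H = H)
    (hann : ∀ v : Fin n → ℝ, ∑ i, ∑ j, H i j * v j = 0)
    (τu : ℝ) (hτu : τu = (1 / (n : ℝ)) * ∑ i, t i / π₁ * y i)
    (τadj : ℝ) (hτadj : τadj = τu - (1 / (n : ℝ)) * ∑ i, ∑ j,
        (t i / π₁ - 1) * H i j * (t j * (y j - τu) / π₁))
    (τdb : ℝ) (hτdb : τdb = τadj + (π₀ / π₁) * (1 / (n : ℝ)) *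
        ∑ i, (t i / π₁) * H i i * (y i - τu)) :
    τdb = τu - (1 / (n : ℝ)) * ∑ i, ∑ j ∈ Finset.univ.erase i,
        (t i / π₁ - 1) * H i j * (t j * (y j - τu) / π₁) := by
  subst hτdb hτadj
  have hsplit : ∀ i : Fin n,
      ∑ j, (t i / π₁ - 1) * H i j * (t j * (y j - τu) / π₁)
        = (t i / π₁ - 1) * H i i * (t i * (y i - τu) / π₁)
          + ∑ j ∈ Finset.univ.erase i,
              (t i / π₁ - 1) * H i j * (t j * (y j - τu) / π₁) :=
    fun i => (Finset.add_sum_erase Finset.univ _ (Finset.mem_univ i)).symm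
  have hdiag : ∀ i, (π₀ / π₁) * ((t i / π₁) * H i i * (y i - τu))
      = (t i / π₁ - 1) * H i i * (t i * (y i - τu) / π₁) := by
    intro i
    rcases ht i with h | h <;> rw [h, hπ0] <;> field_simp <;> ring
  simp_rw [hsplit, Finset.sum_add_distrib]
  have h2 : π₀ / π₁ * (1 / (n : ℝ)) * ∑ i, t i / π₁ * H i i * (y i - τu)
      = (1 / (n : ℝ)) * ∑ i, (t i / π₁ - 1) * H i i * (t i * (y i - τu) / π₁) := by
    rw [mul_comm (π₀ / π₁), mul_assoc, Finset.mul_sum, Finset.mul_sum]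
    simp_rw [hdiag, ← Finset.mul_sum]
  rw [h2]
  ring
end
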